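/- Heller bound for convolutional codes: Let F_q be a finite field with q elements, let G ∈ F_q[z]^{k×n} (1 ≤ k < n) be right invertible and minimal with row degrees ν_1,…,ν_k, complexity δ = ν_1 + … + ν_k, and memory m = max{ν_1,…,ν_k}, and let d = min{ wt(uG) : u ∈ F_q[z]^k, u ≠ 0 } be the free distance of the convolutional code generated by G. Then for every integer i with i ≥ 1 if km = δ, respectively i ≥ 0 if km > δ, one has d ≤ ⌊ n(m+i)·q^{k(m+i)-δ-1}·(q-1) / (q^{k(m+i)-δ} - 1) ⌋. -/

import Mathlib

/-!
Heller's bound is the Plotkin bound applied to a block code cut out of the convolutional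
code. With `e r = m + i - ν r`, messages `u` with `deg u r < e r` form an `F`-space of
dimension `∑ e r = k(m+i) - δ`, and every codeword `uG` then has all its entries of degree
`< m + i`, so it is a word of length `n(m+i)` whose Hamming weight is `wt(uG)`. Averaging
the weight over the nonzero messages, each coordinate is a linear functional and is nonzero on
at most a fraction `(q-1)/q` of the messages. The hypothesis on `i` makes the dimension positive.
-/

open Polynomial Matrix

/-- The weight of a vector of polynomials: the total number of nonzero coefficients
occurring in its polynomial entries. -/
def polyWt {F : Type*} [Field F] {n : ℕ} (v : Fin n → Polynomial F) : ℕ :=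
  ∑ j, (v j).support.card

/-- The complexity of a polynomial generator matrix `G ∈ F[z]^{k×n}`:
the maximal degree of its `k×k` minors. -/
noncomputable def complexity {F : Type*} [Field F] {k n : ℕ}
    (G : Matrix (Fin k) (Fin n) (Polynomial F)) : ℕ :=
  Finset.univ.sup fun f : Fin k ↪ Fin n => ((G.submatrix id ⇑f).det).natDegree

/-- The `r`-th row degree of a polynomial matrix: the maximal degree of the
polynomial entries in row `r`. -/
noncomputable def rowDeg {F : Type*} [Field F] {k n : ℕ}
    (G : Matrix (Fin k) (Fin n) (Polynomial F)) (r : Fin k) : ℕ :=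
  Finset.univ.sup fun j => (G r j).natDegree

open Finset

theorem LinearMap.card_filter_ne_zero_mul_card_le {F V : Type*} [Field F] [Fintype F]
    [DecidableEq F] [AddCommGroup V] [Module F V] [Fintype V] (f : V →ₗ[F] F) :
    #{c | f c ≠ 0} * Fintype.card F ≤ Fintype.card V * (Fintype.card F - 1) := by
  classical
  have hker : #{c | f c = 0} * Nat.card (LinearMap.range f) = Fintype.card V := by
    rw [← Nat.card_eq_fintype_card, ← (LinearMap.ker f).toAddSubgroup.card_mul_index]
    congr 1
    · rw [← Fintype.card_subtype, ← Nat.card_eq_fintype_card]; rfl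
    · exact (AddSubgroup.index_ker (f : V →+ F)).symm
  have hrange : Nat.card (LinearMap.range f) ≤ Fintype.card F :=
    Nat.card_eq_fintype_card (α := F) ▸ Nat.card_le_card_of_injective _ Subtype.val_injective
  have hsplit := card_filter_add_card_filter_not (s := univ) (p := fun c => f c ≠ 0)
  simp only [not_not, card_univ] at hsplit
  have hq : 1 ≤ Fintype.card F := Fintype.card_pos
  obtain ⟨p, hp⟩ : ∃ p, Fintype.card F = p + 1 := ⟨_, (Nat.sub_add_cancel hq).symm⟩
  rw [hp] at hrange ⊢
  simp only [Nat.add_sub_cancel]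
  nlinarith

theorem LinearMap.plotkin_bound {F V ι : Type*} [Field F] [Fintype F] [DecidableEq F]
    [AddCommGroup V] [Module F V] [Fintype V] [Fintype ι] (φ : V →ₗ[F] ι → F) {d : ℕ}
    (hd : ∀ c ≠ 0, d ≤ hammingNorm (φ c)) :
    d * (Fintype.card V - 1) * Fintype.card F ≤
      Fintype.card ι * Fintype.card V * (Fintype.card F - 1) := by
  classical
  have hsum : ∑ c, hammingNorm (φ c) = ∑ s, #{c | φ c s ≠ 0} := by
    simp only [hammingNorm, card_filter]
    exact sum_comm
  calc d * (Fintype.card V - 1) * Fintype.card F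
      = (∑ _c ∈ (univ : Finset V).erase 0, d) * Fintype.card F := by
        rw [sum_const, card_erase_of_mem (mem_univ _), card_univ, smul_eq_mul, mul_comm d]
    _ ≤ (∑ c, hammingNorm (φ c)) * Fintype.card F := by
        gcongr
        calc ∑ _c ∈ (univ : Finset V).erase 0, d ≤ ∑ c ∈ univ.erase 0, hammingNorm (φ c) :=
              sum_le_sum fun c hc => hd c (ne_of_mem_erase hc)
          _ ≤ ∑ c, hammingNorm (φ c) := sum_le_sum_of_subset (erase_subset _ _)
    _ = ∑ s, #{c | (LinearMap.proj s ∘ₗ φ) c ≠ 0} * Fintype.card F := by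
        rw [hsum, sum_mul]; rfl
    _ ≤ ∑ _s : ι, Fintype.card V * (Fintype.card F - 1) :=
        sum_le_sum fun s _ => (LinearMap.proj s ∘ₗ φ).card_filter_ne_zero_mul_card_le
    _ = Fintype.card ι * Fintype.card V * (Fintype.card F - 1) := by
        rw [sum_const, card_univ, smul_eq_mul, mul_assoc]

namespace Polynomial

theorem natCard_degreeLT (R : Type*) [Semiring R] (N : ℕ) :
    Nat.card (degreeLT R N) = Nat.card R ^ N := by
  rw [Nat.card_congr (degreeLTEquiv R N).toEquiv, Nat.card_fun, Nat.card_fin]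

theorem card_support_eq_card_filter_coeff_ne_zero {R : Type*} [Semiring R] [DecidableEq R]
    {p : R[X]} {N : ℕ} (hp : p ∈ degreeLT R N) : p.support.card = #{t : Fin N | p.coeff t ≠ 0} := by
  symm
  refine card_bij (fun t _ => t.val) (fun t ht => by simpa using ht)
    (fun _ _ _ _ h => Fin.ext h) fun a ha => ?_
  have haN : a < N := by
    by_contra! h
    exact mem_support_iff.1 ha (coeff_eq_zero_of_degree_lt ((mem_degreeLT.1 hp).trans_le
      (by exact_mod_cast h)))
  exact ⟨⟨a, haN⟩, by simpa using ha, rfl⟩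

instance finite_degreeLT {R : Type*} [Semiring R] [Finite R] (N : ℕ) :
    Finite (degreeLT R N) :=
  .of_equiv _ (degreeLTEquiv R N).toEquiv.symm

end Polynomial

theorem polyWt_eq_hammingNorm {F : Type*} [Field F] [DecidableEq F] {n N : ℕ} {v : Fin n → F[X]}
    (hv : ∀ j, v j ∈ degreeLT F N) :
    polyWt v = hammingNorm fun jt : Fin n × Fin N => (v jt.1).coeff jt.2 := by
  simp only [polyWt, hammingNorm, card_filter, Fintype.sum_prod_type,
    card_support_eq_card_filter_coeff_ne_zero (hv _)]

theorem natDegree_le_rowDeg {F : Type*} [Field F] {k n : ℕ} (G : Matrix (Fin k) (Fin n) F[X])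
    (r : Fin k) (j : Fin n) : (G r j).natDegree ≤ rowDeg G r :=
  le_sup (f := fun j => (G r j).natDegree) (mem_univ j)

theorem vecMul_mem_degreeLT {F : Type*} [Field F] {k n N : ℕ} (G : Matrix (Fin k) (Fin n) F[X])
    {e : Fin k → ℕ} {u : Fin k → F[X]} (hu : ∀ r, u r ∈ degreeLT F (e r))
    (he : ∀ r, e r + rowDeg G r ≤ N) (j : Fin n) : vecMul u G j ∈ degreeLT F N := by
  simp only [vecMul, dotProduct]
  refine sum_mem fun r _ => ?_
  obtain hG0 | hG0 := eq_or_ne (G r j) 0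
  · simp [hG0]
  refine mem_degreeLT.2 ?_
  calc (u r * G r j).degree ≤ (u r).degree + (G r j).degree := degree_mul_le _ _
    _ < e r + rowDeg G r := by
        have hG : (G r j).degree ≤ rowDeg G r :=
          degree_le_of_natDegree_le (natDegree_le_rowDeg G r j)
        exact WithBot.add_lt_add_of_lt_of_le (degree_ne_bot.2 hG0) (mem_degreeLT.1 (hu r)) hG
    _ ≤ N := by exact_mod_cast he r

noncomputable def truncatedEncoder {R : Type*} [CommSemiring R] {k n : ℕ}
    (G : Matrix (Fin k) (Fin n) R[X]) (e : Fin k → ℕ) (N : ℕ) :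
    ((r : Fin k) → degreeLT R (e r)) →ₗ[R] Fin n × Fin N → R where
  toFun c jt := (vecMul (fun r => (c r : R[X])) G jt.1).coeff jt.2
  map_add' c c' := by
    ext jt
    simp only [Submodule.coe_add, Pi.add_apply]
    rw [← Pi.add_def, add_vecMul, Pi.add_apply, coeff_add]
  map_smul' a c := by
    ext jt
    simp only [Submodule.coe_smul, RingHom.id_apply, Pi.smul_apply, smul_eq_mul]
    rw [← Pi.smul_def, smul_vecMul, Pi.smul_apply, coeff_smul, smul_eq_mul]

theorem le_floor_of_mul_pow_sub_one_le {d M q K : ℕ} (hq : 2 ≤ q) (hK : 1 ≤ K)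
    (h : d * (q ^ K - 1) * q ≤ M * q ^ K * (q - 1)) :
    (d : ℤ) ≤ ⌊(M : ℚ) * (q : ℚ) ^ (K - 1) * ((q : ℚ) - 1) / ((q : ℚ) ^ K - 1)⌋ := by
  obtain ⟨K, rfl⟩ : ∃ K', K = K' + 1 := ⟨K - 1, by omega⟩
  have hq' : (2 : ℚ) ≤ q := by exact_mod_cast hq
  have hqK : (1 : ℚ) < (q : ℚ) ^ (K + 1) := one_lt_pow₀ (by linarith) (by omega)
  rw [Int.le_floor, Int.cast_natCast, le_div_iff₀ (by linarith), Nat.add_sub_cancel]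
  have h1 : 1 ≤ q ^ (K + 1) := Nat.one_le_pow _ _ (by omega)
  have hq1 : 1 ≤ q := by omega
  qify [h1, hq1] at h
  refine le_of_mul_le_mul_right ?_ (by linarith : (0 : ℚ) < q)
  calc (d : ℚ) * ((q : ℚ) ^ (K + 1) - 1) * q ≤ M * (q : ℚ) ^ (K + 1) * (q - 1) := h
    _ = M * (q : ℚ) ^ K * (q - 1) * q := by ring

theorem convolutional_heller_bound_general
    {F : Type*} [Field F] [Fintype F] {q k n : ℕ} (hq : Fintype.card F = q)
    (hk : 1 ≤ k)
    (G : Matrix (Fin k) (Fin n) (Polynomial F))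
    (ν : Fin k → ℕ) (hν : ∀ r, ν r = rowDeg G r)
    (δ m : ℕ) (hδ : δ = ∑ r, ν r)
    (hm : m = Finset.univ.sup ν)
    (d : ℕ)
    (hd : IsLeast {w : ℕ | ∃ u : Fin k → Polynomial F,
      u ≠ 0 ∧ w = polyWt (Matrix.vecMul u G)} d)
    (i : ℕ) (hi : k * m = δ → 1 ≤ i) :
    (d : ℤ) ≤ ⌊((n * (m + i) : ℕ) : ℚ) * (q : ℚ) ^ (k * (m + i) - δ - 1) * ((q : ℚ) - 1) /
        ((q : ℚ) ^ (k * (m + i) - δ) - 1)⌋ := by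
  classical
  set e : Fin k → ℕ := fun r => m + i - ν r
  have hνm : ∀ r, ν r ≤ m := fun r => hm ▸ le_sup (mem_univ r)
  have he : ∀ r, e r + rowDeg G r ≤ m + i := fun r => by
    rw [← hν]; exact (Nat.sub_add_cancel ((hνm r).trans (m.le_add_right i))).le
  have hδkm : δ ≤ k * m := hδ ▸ (sum_le_card_nsmul _ _ _ fun r _ => hνm r).trans (by simp)
  have hK : ∑ r, e r = k * (m + i) - δ := by
    rw [sum_tsub_distrib _ fun r _ => by have := hνm r; omega, hδ]; simp
  have hK1 : 1 ≤ k * (m + i) - δ := by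
    rw [Nat.mul_add]
    rcases hδkm.eq_or_lt with h | h
    · have := Nat.mul_le_mul hk (hi h.symm); omega
    · omega
  have hcard : Nat.card ((r : Fin k) → degreeLT F (e r)) = q ^ (k * (m + i) - δ) := by
    simp only [Nat.card_pi, natCard_degreeLT, Nat.card_eq_fintype_card, hq, prod_pow_eq_pow_sum,
      hK]
  have hwt : ∀ c ≠ 0, d ≤ hammingNorm (truncatedEncoder G e (m + i) c) := by
    intro c hc
    refine (hd.2 ⟨fun r => c r, ?_, rfl⟩).trans_eq
      (polyWt_eq_hammingNorm (vecMul_mem_degreeLT G (fun r => (c r).2) he))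
    contrapose! hc
    exact funext fun r => Subtype.ext (congrFun hc r)
  have : Fintype ((r : Fin k) → degreeLT F (e r)) := Fintype.ofFinite _
  have hplotkin := (truncatedEncoder G e (m + i)).plotkin_bound hwt
  rw [Fintype.card_prod, Fintype.card_fin, Fintype.card_fin, ← Nat.card_eq_fintype_card, hcard,
    hq] at hplotkin
  exact le_floor_of_mul_pow_sub_one_le (hq ▸ Fintype.one_lt_card) hK1 hplotkin

/-- **Heller bound for convolutional codes.**
Let `F_q` be a finite field with `q` elements, `G ∈ F_q[z]^{k×n}` (`1 ≤ k < n`)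
right invertible and minimal with row degrees `ν`, complexity `δ = ∑ ν r`, memory
`m = max ν`, and let `d` be the free distance of the convolutional code generated
by `G`.  Then for every integer `i` (with `i ≥ 1` if `km = δ`, resp. `i ≥ 0` if
`km > δ`) one has `d ≤ ⌊ n(m+i)·q^{k(m+i)-δ-1}·(q-1) / (q^{k(m+i)-δ} - 1) ⌋`. -/
theorem convolutional_heller_bound
    {F : Type*} [Field F] [Fintype F] {q k n : ℕ} (hq : Fintype.card F = q)
    (hk : 1 ≤ k) (hkn : k < n)
    (G : Matrix (Fin k) (Fin n) (Polynomial F))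
    (hright : ∃ H : Matrix (Fin n) (Fin k) (Polynomial F), G * H = 1)
    (ν : Fin k → ℕ) (hν : ∀ r, ν r = rowDeg G r)
    (δ m : ℕ) (hδ : δ = ∑ r, ν r)
    (hminimal : complexity G = δ)
    (hm : m = Finset.univ.sup ν)
    (d : ℕ)
    (hd : IsLeast {w : ℕ | ∃ u : Fin k → Polynomial F,
      u ≠ 0 ∧ w = polyWt (Matrix.vecMul u G)} d)
    (i : ℕ) (hi : k * m = δ → 1 ≤ i) :
    (d : ℤ) ≤ ⌊((n * (m + i) : ℕ) : ℚ) * (q : ℚ) ^ (k * (m + i) - δ - 1) * ((q : ℚ) - 1) /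
        ((q : ℚ) ^ (k * (m + i) - δ) - 1)⌋ :=
  convolutional_heller_bound_general hq hk G ν hν δ m hδ hm d hd i hi
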